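/- On dS₃, the curl of a symmetric tensor field T_{ab} satisfying D^b T_{ab} = D_a T (where T = T^c{}_c) is symmetric: (curl T)_{[ab]} = 0, where (curl T)_{ab} = ε_a{}^{cd} D_c T_{db}. -/

import Mathlib

noncomputable section

open Real

/-- Points of the coordinate chart `(τ, θ, φ)` on three-dimensional de Sitter space. -/
abbrev Pt := Fin 3 → ℝ

/-- Partial derivative along the `i`-th coordinate. -/
def pd (i : Fin 3) (f : Pt → ℝ) (x : Pt) : ℝ :=
  fderiv ℝ f x (Pi.single i 1)

/-- The dS₃ metric `h⁽⁰⁾ = -dτ² + cosh²τ (dθ² + sin²θ dφ²)`. -/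
def gmet (x : Pt) (a b : Fin 3) : ℝ :=
  if a = b then
    if a = 0 then -1
    else if a = 1 then (Real.cosh (x 0))^2
    else (Real.cosh (x 0))^2 * (Real.sin (x 1))^2
  else 0

/-- The inverse dS₃ metric `h⁽⁰⁾^{ab}`. -/
def ginv (x : Pt) (a b : Fin 3) : ℝ :=
  if a = b then
    if a = 0 then -1
    else if a = 1 then ((Real.cosh (x 0))^2)⁻¹
    else ((Real.cosh (x 0))^2 * (Real.sin (x 1))^2)⁻¹
  else 0

/-- Christoffel symbols `Γ^c_{ab}` of the Levi-Civita connection of `gmet`. -/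
def chr (x : Pt) (a b c : Fin 3) : ℝ :=
  (1/2) * ∑ d, ginv x c d *
    (pd a (fun y => gmet y d b) x + pd b (fun y => gmet y a d) x
      - pd d (fun y => gmet y a b) x)

/-- Covariant derivative of a covector: `(D t)_{ab} = D_a t_b`. -/
def covD1 (t : Pt → Fin 3 → ℝ) (x : Pt) (a b : Fin 3) : ℝ :=
  pd a (fun y => t y b) x - ∑ c, chr x a b c * t x c

/-- Covariant derivative of a rank-2 tensor: `(D T)_{abc} = D_a T_{bc}`. -/
def covD2 (T : Pt → Fin 3 → Fin 3 → ℝ) (x : Pt) (a b c : Fin 3) : ℝ :=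
  pd a (fun y => T y b c) x - ∑ d, chr x a b d * T x d c - ∑ d, chr x a c d * T x b d

/-- Covariant derivative of a rank-3 tensor: `(D T)_{abcd} = D_a T_{bcd}`. -/
def covD3 (T : Pt → Fin 3 → Fin 3 → Fin 3 → ℝ) (x : Pt) (a b c d : Fin 3) : ℝ :=
  pd a (fun y => T y b c d) x - ∑ e, chr x a b e * T x e c d
    - ∑ e, chr x a c e * T x b e d - ∑ e, chr x a d e * T x b c e

/-- Hessian `D_a D_b f` of a scalar. -/
def hess (f : Pt → ℝ) (x : Pt) (a b : Fin 3) : ℝ :=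
  covD1 (fun y c => pd c f y) x a b

/-- The d'Alembertian `□ f = h⁽⁰⁾^{ab} D_a D_b f` on scalars. -/
def boxS (f : Pt → ℝ) (x : Pt) : ℝ :=
  ∑ a, ∑ b, ginv x a b * hess f x a b

/-- The d'Alembertian `□ = D^c D_c` on covectors. -/
def box1 (t : Pt → Fin 3 → ℝ) (x : Pt) (b : Fin 3) : ℝ :=
  ∑ a, ∑ c, ginv x a c * covD2 (fun y => covD1 t y) x a c b

/-- The d'Alembertian `□ = D^c D_c` on rank-2 tensors. -/
def box2 (T : Pt → Fin 3 → Fin 3 → ℝ) (x : Pt) (b c : Fin 3) : ℝ :=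
  ∑ a, ∑ d, ginv x a d * covD3 (fun y => covD2 T y) x a d b c

/-- The Levi-Civita symbol on three indices. -/
def levi (a b c : Fin 3) : ℝ :=
  ((((b : ℤ) - a) * ((c : ℤ) - b) * ((c : ℤ) - a) : ℤ) : ℝ) / 2

/-- The volume form `ε_{abc}` of dS₃, normalized by `ε_{τθφ} = cosh²τ sin θ`. -/
def eps (x : Pt) (a b c : Fin 3) : ℝ :=
  (Real.cosh (x 0))^2 * Real.sin (x 1) * levi a b c

/-- The curl `(curl T)_{ab} = ε_a{}^{cd} D_c T_{db}` of a rank-2 tensor. -/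
def curl (T : Pt → Fin 3 → Fin 3 → ℝ) (x : Pt) (a b : Fin 3) : ℝ :=
  ∑ c, ∑ d, ∑ e, ∑ f, ginv x c e * ginv x d f * eps x a e f * covD2 T x c d b


section Helpers

lemma hproj (j : Fin 3) (x : Pt) :
    HasFDerivAt (fun y : Pt => y j) (ContinuousLinearMap.proj j : Pt →L[ℝ] ℝ) x :=
  (ContinuousLinearMap.proj j : Pt →L[ℝ] ℝ).hasFDerivAt

lemma hcomp1 {f : ℝ → ℝ} {f' : ℝ} (j : Fin 3) {x : Pt} (h : HasDerivAt f f' (x j)) :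
    HasFDerivAt (fun y : Pt => f (y j)) (f' • (ContinuousLinearMap.proj j : Pt →L[ℝ] ℝ)) x :=
  h.comp_hasFDerivAt x (hproj j x)

lemma pd_eval {f : Pt → ℝ} {x : Pt} {f' : Pt →L[ℝ] ℝ} (h : HasFDerivAt f f' x) (i : Fin 3) :
    pd i f x = f' (Pi.single i 1) := by rw [pd, h.fderiv]

lemma pd_comp1 {f : ℝ → ℝ} {f' : ℝ} (j : Fin 3) {x : Pt} (h : HasDerivAt f f' (x j)) (i : Fin 3) :
    pd i (fun y => f (y j)) x = if j = i then f' else 0 := by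
  rw [pd_eval (hcomp1 j h) i]
  simp [Pi.single_apply, eq_comm]

lemma pd_const (i : Fin 3) (c : ℝ) (x : Pt) : pd i (fun _ => c) x = 0 := by
  simp [pd]

lemma pd_mul {f g : Pt → ℝ} {x : Pt} (hf : DifferentiableAt ℝ f x) (hg : DifferentiableAt ℝ g x)
    (i : Fin 3) : pd i (fun y => f y * g y) x = pd i f x * g x + f x * pd i g x := by
  rw [pd, fderiv_fun_mul hf hg]
  simp [pd]; ring

lemma pd_add {f g : Pt → ℝ} {x : Pt} (hf : DifferentiableAt ℝ f x) (hg : DifferentiableAt ℝ g x)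
    (i : Fin 3) : pd i (fun y => f y + g y) x = pd i f x + pd i g x := by
  rw [pd, fderiv_fun_add hf hg]; simp [pd]

lemma pd_neg {f : Pt → ℝ} {x : Pt} (i : Fin 3) :
    pd i (fun y => -(f y)) x = -pd i f x := by
  rw [pd, fderiv_fun_neg]; simp [pd]

lemma hd_cosh_sq (t : ℝ) :
    HasDerivAt (fun u => Real.cosh u ^ 2) (2 * Real.cosh t * Real.sinh t) t := by
  have h := (Real.hasDerivAt_cosh t).fun_pow 2
  simpa [mul_comm, mul_assoc, mul_left_comm] using h

lemma hd_sin_sq (t : ℝ) :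
    HasDerivAt (fun u => Real.sin u ^ 2) (2 * Real.sin t * Real.cos t) t := by
  have h := (Real.hasDerivAt_sin t).fun_pow 2
  simpa [mul_comm, mul_assoc, mul_left_comm] using h

lemma pd_gmet (x : Pt) (i d b : Fin 3) :
    pd i (fun y => gmet y d b) x =
    if d = b then
      (if d = 1 then (if i = 0 then 2 * Real.cosh (x 0) * Real.sinh (x 0) else 0)
       else if d = 2 then
         (if i = 0 then 2 * Real.cosh (x 0) * Real.sinh (x 0) * Real.sin (x 1) ^ 2
          else if i = 1 then Real.cosh (x 0) ^ 2 * (2 * Real.sin (x 1) * Real.cos (x 1)) else 0)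
       else 0)
    else 0 := by
  have h22 : pd i (fun y => Real.cosh (y 0) ^ 2 * Real.sin (y 1) ^ 2) x =
      (if i = 0 then 2 * Real.cosh (x 0) * Real.sinh (x 0) * Real.sin (x 1) ^ 2
       else if i = 1 then Real.cosh (x 0) ^ 2 * (2 * Real.sin (x 1) * Real.cos (x 1)) else 0) := by
    rw [pd_mul ((hcomp1 0 (hd_cosh_sq (x 0))).differentiableAt)
        ((hcomp1 1 (hd_sin_sq (x 1))).differentiableAt) i]
    rw [pd_comp1 0 (hd_cosh_sq (x 0)) i, pd_comp1 1 (hd_sin_sq (x 1)) i]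
    fin_cases i <;> norm_num [Fin.ext_iff]
  have h11 : pd i (fun y => Real.cosh (y 0) ^ 2) x =
      (if i = 0 then 2 * Real.cosh (x 0) * Real.sinh (x 0) else 0) := by
    rw [pd_comp1 0 (hd_cosh_sq (x 0)) i]
    fin_cases i <;> norm_num [Fin.ext_iff]
  fin_cases d <;> fin_cases b <;>
    simp only [show ((⟨2, by omega⟩ : Fin 3)) = (2 : Fin 3) from rfl,
      show ((⟨0, by omega⟩ : Fin 3)) = (0 : Fin 3) from rfl,
      show ((⟨1, by omega⟩ : Fin 3)) = (1 : Fin 3) from rfl] <;>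
    simp only [show (fun y => gmet y 0 0) = (fun _ : Pt => (-1:ℝ)) from rfl,
      show (fun y => gmet y 0 1) = (fun _ : Pt => (0:ℝ)) from rfl,
      show (fun y => gmet y 0 2) = (fun _ : Pt => (0:ℝ)) from rfl,
      show (fun y => gmet y 1 0) = (fun _ : Pt => (0:ℝ)) from rfl,
      show (fun y => gmet y 1 2) = (fun _ : Pt => (0:ℝ)) from rfl,
      show (fun y => gmet y 2 0) = (fun _ : Pt => (0:ℝ)) from rfl,
      show (fun y => gmet y 2 1) = (fun _ : Pt => (0:ℝ)) from rfl,
      show (fun y => gmet y 1 1) = (fun y : Pt => Real.cosh (y 0) ^ 2) from rfl,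
      show (fun y => gmet y 2 2) = (fun y : Pt => Real.cosh (y 0) ^ 2 * Real.sin (y 1) ^ 2) from rfl,
      pd_const, h11, h22] <;>
    norm_num +decide

lemma chr_eval (x : Pt) (a b c : Fin 3) :
    chr x a b c =
    if c = 0 then
      (if a = 1 ∧ b = 1 then Real.cosh (x 0) * Real.sinh (x 0)
       else if a = 2 ∧ b = 2 then Real.cosh (x 0) * Real.sinh (x 0) * Real.sin (x 1) ^ 2
       else 0)
    else if c = 1 then
      (if (a = 0 ∧ b = 1) ∨ (a = 1 ∧ b = 0) then
          ((Real.cosh (x 0)) ^ 2)⁻¹ * (Real.cosh (x 0) * Real.sinh (x 0))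
       else if a = 2 ∧ b = 2 then
          -(((Real.cosh (x 0)) ^ 2)⁻¹ * ((Real.cosh (x 0)) ^ 2 * Real.sin (x 1) * Real.cos (x 1)))
       else 0)
    else
      (if (a = 0 ∧ b = 2) ∨ (a = 2 ∧ b = 0) then
          ((Real.cosh (x 0)) ^ 2 * (Real.sin (x 1)) ^ 2)⁻¹ *
            (Real.cosh (x 0) * Real.sinh (x 0) * Real.sin (x 1) ^ 2)
       else if (a = 1 ∧ b = 2) ∨ (a = 2 ∧ b = 1) then
          ((Real.cosh (x 0)) ^ 2 * (Real.sin (x 1)) ^ 2)⁻¹ *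
            ((Real.cosh (x 0)) ^ 2 * Real.sin (x 1) * Real.cos (x 1))
       else 0) := by
  fin_cases a <;> fin_cases b <;> fin_cases c <;>
    simp only [show ((⟨2, by omega⟩ : Fin 3)) = (2 : Fin 3) from rfl,
      show ((⟨0, by omega⟩ : Fin 3)) = (0 : Fin 3) from rfl,
      show ((⟨1, by omega⟩ : Fin 3)) = (1 : Fin 3) from rfl] <;>
    norm_num +decide [chr, ginv, Fin.sum_univ_three, pd_gmet] <;> ring

end Helpers

set_option maxHeartbeats 2000000 in
/-- On dS₃, the curl of a symmetric tensor `T_{ab}` with `D^b T_{ab} = D_a T` is symmetric. -/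
theorem curl_symmetric (T : Pt → Fin 3 → Fin 3 → ℝ)
    (hT : ∀ a b : Fin 3, ContDiff ℝ (⊤ : ℕ∞) (fun y => T y a b))
    (hsym : ∀ x : Pt, ∀ a b : Fin 3, T x a b = T x b a)
    (hdiv : ∀ x : Pt, Real.sin (x 1) ≠ 0 → ∀ a : Fin 3,
      (∑ b, ∑ c, ginv x b c * covD2 T x b a c)
        = pd a (fun y => ∑ c, ∑ d, ginv y c d * T y c d) x) :
    ∀ x : Pt, Real.sin (x 1) ≠ 0 → ∀ a b : Fin 3,
      curl T x a b = curl T x b a := by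
  intro x hs a b
  have hch : Real.cosh (x 0) ≠ 0 := (Real.cosh_pos (x 0)).ne'
  have hTd : ∀ j k : Fin 3, DifferentiableAt ℝ (fun y => T y j k) x :=
    fun j k => ((hT j k).differentiable (by simp)).differentiableAt
  have e10 : (fun y => T y 1 0) = (fun y => T y 0 1) := funext fun y => hsym y 1 0
  have e20 : (fun y => T y 2 0) = (fun y => T y 0 2) := funext fun y => hsym y 2 0
  have e21 : (fun y => T y 2 1) = (fun y => T y 1 2) := funext fun y => hsym y 2 1
  have hdInvC : HasDerivAt (fun u => ((Real.cosh u)^2)⁻¹)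
      (-(2*Real.cosh (x 0)*Real.sinh (x 0)) / (((Real.cosh (x 0))^2)^2)) (x 0) :=
    (hd_cosh_sq (x 0)).inv (pow_ne_zero 2 hch)
  have hdInvS : HasDerivAt (fun u => ((Real.sin u)^2)⁻¹)
      (-(2*Real.sin (x 1)*Real.cos (x 1)) / (((Real.sin (x 1))^2)^2)) (x 1) :=
    (hd_sin_sq (x 1)).inv (pow_ne_zero 2 hs)
  have d1 : DifferentiableAt ℝ (fun y : Pt => ((Real.cosh (y 0))^2)⁻¹) x :=
    (hcomp1 0 hdInvC).differentiableAt
  have d2 : DifferentiableAt ℝ (fun y : Pt => ((Real.sin (y 1))^2)⁻¹) x :=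
    (hcomp1 1 hdInvS).differentiableAt
  have htr : (fun y : Pt => ∑ c, ∑ d, ginv y c d * T y c d) =
      (fun y : Pt => -(T y 0 0) + (((Real.cosh (y 0))^2)⁻¹ * T y 1 1
        + ((Real.cosh (y 0))^2)⁻¹ * ((Real.sin (y 1))^2)⁻¹ * T y 2 2)) := by
    funext y
    simp [ginv, Fin.sum_univ_three]
    ring
  have hpdtr : ∀ e : Fin 3, pd e (fun y => ∑ c, ∑ d, ginv y c d * T y c d) x =
      -(pd e (fun y => T y 0 0) x)
      + (((if (0:Fin 3) = e then -(2*Real.cosh (x 0)*Real.sinh (x 0)) / (((Real.cosh (x 0))^2)^2) else 0) * T x 1 1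
          + ((Real.cosh (x 0))^2)⁻¹ * pd e (fun y => T y 1 1) x)
        + (((if (0:Fin 3) = e then -(2*Real.cosh (x 0)*Real.sinh (x 0)) / (((Real.cosh (x 0))^2)^2) else 0) * ((Real.sin (x 1))^2)⁻¹
            + ((Real.cosh (x 0))^2)⁻¹ * (if (1:Fin 3) = e then -(2*Real.sin (x 1)*Real.cos (x 1)) / (((Real.sin (x 1))^2)^2) else 0)) * T x 2 2
          + ((Real.cosh (x 0))^2)⁻¹ * ((Real.sin (x 1))^2)⁻¹ * pd e (fun y => T y 2 2) x)) := by
    intro e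
    rw [htr]
    rw [pd_add ((hTd 0 0).fun_neg) ((d1.fun_mul (hTd 1 1)).fun_add ((d1.fun_mul d2).fun_mul (hTd 2 2))) e]
    rw [pd_neg]
    rw [pd_add (d1.fun_mul (hTd 1 1)) ((d1.fun_mul d2).fun_mul (hTd 2 2)) e]
    rw [pd_mul d1 (hTd 1 1) e, pd_mul (d1.fun_mul d2) (hTd 2 2) e, pd_mul d1 d2 e]
    rw [pd_comp1 0 hdInvC e, pd_comp1 1 hdInvS e]
  have h0 := hdiv x hs 0
  have h1 := hdiv x hs 1
  have h2 := hdiv x hs 2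
  rw [hpdtr 0] at h0
  rw [hpdtr 1] at h1
  rw [hpdtr 2] at h2
  simp only [covD2, Fin.sum_univ_three, chr_eval, ginv] at h0 h1 h2
  norm_num [Fin.ext_iff] at h0 h1 h2
  simp only [e10, e20, e21, hsym x 1 0, hsym x 2 0, hsym x 2 1] at h0 h1 h2
  fin_cases a <;> fin_cases b <;>
    try simp only [show ((⟨2, by omega⟩ : Fin 3)) = (2 : Fin 3) from rfl,
      show ((⟨0, by omega⟩ : Fin 3)) = (0 : Fin 3) from rfl,
      show ((⟨1, by omega⟩ : Fin 3)) = (1 : Fin 3) from rfl]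
  all_goals try rfl
  · -- (0,1)
    simp only [curl, covD2, Fin.sum_univ_three, eps, levi, ginv, chr_eval]
    norm_num [Fin.ext_iff]
    try simp only [e10, e20, e21, hsym x 1 0, hsym x 2 0, hsym x 2 1]
    field_simp at h0 h1 h2 ⊢
    apply mul_left_cancel₀ hs
    linear_combination h2
  · -- (0,2)
    simp only [curl, covD2, Fin.sum_univ_three, eps, levi, ginv, chr_eval]
    norm_num [Fin.ext_iff]
    try simp only [e10, e20, e21, hsym x 1 0, hsym x 2 0, hsym x 2 1]
    field_simp at h0 h1 h2 ⊢
    apply mul_left_cancel₀ hs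
    linear_combination (-Real.sin (x 1)) * h1
  · -- (1,0)
    simp only [curl, covD2, Fin.sum_univ_three, eps, levi, ginv, chr_eval]
    norm_num [Fin.ext_iff]
    try simp only [e10, e20, e21, hsym x 1 0, hsym x 2 0, hsym x 2 1]
    field_simp at h0 h1 h2 ⊢
    apply mul_left_cancel₀ hs
    linear_combination (-1 : ℝ) * h2
  · -- (1,2)
    simp only [curl, covD2, Fin.sum_univ_three, eps, levi, ginv, chr_eval]
    norm_num [Fin.ext_iff]
    try simp only [e10, e20, e21, hsym x 1 0, hsym x 2 0, hsym x 2 1]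
    field_simp at h0 h1 h2 ⊢
    apply mul_left_cancel₀ (pow_ne_zero 6 hch)
    linear_combination (-(Real.cosh (x 0) ^ 6)) * h0
  · -- (2,0)
    simp only [curl, covD2, Fin.sum_univ_three, eps, levi, ginv, chr_eval]
    norm_num [Fin.ext_iff]
    try simp only [e10, e20, e21, hsym x 1 0, hsym x 2 0, hsym x 2 1]
    field_simp at h0 h1 h2 ⊢
    apply mul_left_cancel₀ hs
    linear_combination (Real.sin (x 1)) * h1
  · -- (2,1)
    simp only [curl, covD2, Fin.sum_univ_three, eps, levi, ginv, chr_eval]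
    norm_num [Fin.ext_iff]
    try simp only [e10, e20, e21, hsym x 1 0, hsym x 2 0, hsym x 2 1]
    field_simp at h0 h1 h2 ⊢
    apply mul_left_cancel₀ (pow_ne_zero 6 hch)
    linear_combination (Real.cosh (x 0) ^ 6) * h0
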